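/- arXiv:1809.07118 — 5 statements merged into one kernel-verified Lean document; each statement's English description precedes it below -/
import Mathlib

section
/- A ℤ-graded ring R is strongly graded if and only if there exist a partition of unity of type (1,−1) and a partition of unity of type (−1,1) in R. -/
/-- A partition of unity of type `(n, -n)` in the `ℤ`-graded ring `R`:
a finite family `α₁, …, α_N ∈ R_n`, `β₁, …, β_N ∈ R_{-n}` with `∑ j, α j * β j = 1`. -/
def HasPartitionOfUnity {R : Type*} [Ring R] (𝒜 : ℤ → AddSubgroup R) (n : ℤ) : Prop :=
  ∃ (N : ℕ) (α β : Fin N → R),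
    (∀ j, α j ∈ 𝒜 n) ∧ (∀ j, β j ∈ 𝒜 (-n)) ∧ ∑ j, α j * β j = 1

/- Partitions of unity of types `n` and `m` multiply to one of type `n + m`: nesting the first
inside the second, `∑ i k, (γ k * α i) * (β i * δ k) = ∑ k, γ k * 1 * δ k = 1`.
As `0 = 1 + (-1)`, induction over `ℤ` then builds every type from `1` and `-1`. -/

open Finset

theorem sum_prod_mul_mul_eq_one {R ι κ : Type*} [Ring R] [Fintype ι] [Fintype κ]
    {a b : ι → R} {c d : κ → R} (hab : ∑ i, a i * b i = 1) (hcd : ∑ k, c k * d k = 1) :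
    ∑ p : ι × κ, c p.2 * a p.1 * (b p.1 * d p.2) = 1 :=
  calc ∑ p : ι × κ, c p.2 * a p.1 * (b p.1 * d p.2)
      = ∑ k, c k * (∑ i, a i * b i) * d k := by
        rw [Fintype.sum_prod_type_right]
        simp only [mul_sum, sum_mul, mul_assoc]
    _ = 1 := by simpa only [hab, mul_one] using hcd

namespace HasPartitionOfUnity

variable {R : Type*} [Ring R] {𝒜 : ℤ → AddSubgroup R}

theorem of_fintype {ι : Type*} [Fintype ι] {n : ℤ} (α β : ι → R) (hα : ∀ i, α i ∈ 𝒜 n)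
    (hβ : ∀ i, β i ∈ 𝒜 (-n)) (hαβ : ∑ i, α i * β i = 1) : HasPartitionOfUnity 𝒜 n := by
  let e := Fintype.equivFin ι
  refine ⟨Fintype.card ι, α ∘ e.symm, β ∘ e.symm, fun _ => hα _, fun _ => hβ _, ?_⟩
  rw [← hαβ]
  exact e.symm.sum_comp fun i => α i * β i

theorem add [SetLike.GradedMul 𝒜] {n m : ℤ} (hn : HasPartitionOfUnity 𝒜 n)
    (hm : HasPartitionOfUnity 𝒜 m) : HasPartitionOfUnity 𝒜 (n + m) := by
  obtain ⟨N, α, β, hα, hβ, hαβ⟩ := hn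
  obtain ⟨M, γ, δ, hγ, hδ, hγδ⟩ := hm
  refine of_fintype (fun p : Fin N × Fin M => γ p.2 * α p.1) (fun p => β p.1 * δ p.2)
    (fun p => ?_) (fun p => ?_) (sum_prod_mul_mul_eq_one hαβ hγδ)
  · rw [add_comm]
    exact SetLike.mul_mem_graded (hγ _) (hα _)
  · rw [neg_add]
    exact SetLike.mul_mem_graded (hβ _) (hδ _)

end HasPartitionOfUnity

/-- **Corollary.**  A `ℤ`-graded ring is strongly graded (i.e. possesses partitions of
unity of type `(n, -n)` for every `n : ℤ`) if and only if it possesses partitions of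
unity of types `(1, -1)` and `(-1, 1)`. -/
theorem stronglyGraded_iff_pou_one {R : Type*} [Ring R] (𝒜 : ℤ → AddSubgroup R)
    [GradedRing 𝒜] :
    (∀ n : ℤ, HasPartitionOfUnity 𝒜 n) ↔
      HasPartitionOfUnity 𝒜 1 ∧ HasPartitionOfUnity 𝒜 (-1) := by
  refine ⟨fun h => ⟨h 1, h (-1)⟩, fun ⟨h1, hm1⟩ n => ?_⟩
  induction n using Int.induction_on with
  | zero => simpa only [add_neg_cancel] using h1.add hm1
  | succ k ih => exact ih.add h1
  | pred k ih => exact ih.add hm1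
end

section
/- Let R be a strongly ℤ-graded ring and let P be the non-negative part of R. Then the inclusion P ↪ R is an epimorphism in the category of unital rings: for any ring S and any ring homomorphisms f, g : R → S that agree on all elements of P, one has f = g. -/
open DirectSum

theorem RingHom.apply_eq_of_sum_mul_eq_one {R S ι : Type*} [Ring R] [Ring S] [Fintype ι]
    (f g : R →+* S) {α β : ι → R} (hαβ : ∑ j, α j * β j = 1) {x : R}
    (hα : ∀ j, f (α j) = g (α j)) (hxα : ∀ j, f (x * α j) = g (x * α j)) : f x = g x :=
  calc f x = f x * g (∑ j, α j * β j) := by rw [hαβ, map_one, mul_one]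
    _ = ∑ j, f (x * α j) * g (β j) := by
        simp only [map_sum, map_mul, Finset.mul_sum, hα, mul_assoc]
    _ = g (x * ∑ j, α j * β j) := by
        simp only [hxα, ← map_mul, ← map_sum, Finset.mul_sum, mul_assoc]
    _ = g x := by rw [hαβ, mul_one]

theorem DirectSum.Decomposition.ext_of_mem {ι M σ N F : Type*} [DecidableEq ι]
    [AddCommMonoid M] [SetLike σ M] [AddSubmonoidClass σ M] (ℳ : ι → σ) [Decomposition ℳ]
    [AddMonoid N] [FunLike F M N] [AddMonoidHomClass F M N] {f g : F}
    (h : ∀ i, ∀ x ∈ ℳ i, f x = g x) : f = g :=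
  DFunLike.ext f g fun x =>
    Decomposition.inductionOn ℳ (motive := fun x => f x = g x) (by simp only [map_zero])
      (fun m => h _ m m.2) (fun m m' hm hm' => by rw [map_add, map_add, hm, hm']) x

theorem HasPartitionOfUnity.apply_eq {R S : Type*} [Ring R] [Ring S] {𝒜 : ℤ → AddSubgroup R}
    [SetLike.GradedMul 𝒜] {i : ℤ} (hpart : HasPartitionOfUnity 𝒜 (-i)) {f g : R →+* S}
    (hneg : ∀ a ∈ 𝒜 (-i), f a = g a) (hzero : ∀ a ∈ 𝒜 0, f a = g a) {x : R} (hx : x ∈ 𝒜 i) :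
    f x = g x := by
  obtain ⟨N, α, β, hα, -, hαβ⟩ := hpart
  refine f.apply_eq_of_sum_mul_eq_one g hαβ (fun j => hneg _ (hα j)) fun j => hzero _ ?_
  simpa using SetLike.GradedMul.mul_mem hx (hα j)

/-- **Lemma.**  Let `R` be a strongly `ℤ`-graded ring and `P = ⨁_{k ≥ 0} R_k` its
non-negative part, i.e. the set of elements all of whose homogeneous components in
negative degrees vanish.  Then the inclusion `P ⊆ R` is an epimorphism of unital
rings: any two ring homomorphisms `f, g : R → S` agreeing on `P` are equal. -/
theorem nonnegPart_inclusion_epi {R : Type*} [Ring R] (𝒜 : ℤ → AddSubgroup R)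
    [GradedRing 𝒜] (hstrong : ∀ n : ℤ, HasPartitionOfUnity 𝒜 n)
    {S : Type*} [Ring S] (f g : R →+* S)
    (hfg : ∀ x : R, (∀ i : ℤ, i < 0 → (DirectSum.decompose 𝒜 x i : R) = 0) → f x = g x) :
    f = g := by
  have hnonneg : ∀ i, 0 ≤ i → ∀ x ∈ 𝒜 i, f x = g x := fun i hi x hx =>
    hfg x fun j hj => decompose_of_mem_ne 𝒜 hx (by omega)
  refine Decomposition.ext_of_mem 𝒜 fun i x hx => ?_
  rcases le_or_gt 0 i with hi | hi
  · exact hnonneg i hi x hx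
  · exact (hstrong (-i)).apply_eq (hnonneg _ (by omega)) (hnonneg 0 le_rfl) hx
end

section
/- Let R be a strongly ℤ-graded ring. Then for every n ∈ ℤ the homogeneous component R_n is a finitely generated projective left R_0-module. -/
/-- The left `R₀`-module structure on the homogeneous component `R_i` of an internally
graded ring, given by multiplication. -/
noncomputable def gradeZeroModule {R : Type*} [Ring R] (𝒜 : ℤ → AddSubgroup R)
    [GradedRing 𝒜] (i : ℤ) : Module ↥(𝒜 0) ↥(𝒜 i) :=
  DirectSum.instModuleOfNat (A := fun i => ↥(𝒜 i))

/-!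
A partition of unity `∑ⱼ αⱼ βⱼ = 1` with `αⱼ ∈ R₋ₙ`, `βⱼ ∈ Rₙ` is a dual basis of `Rₙ` over `R₀`:
the maps `x ↦ x αⱼ` are `R₀`-linear maps `Rₙ → R₀` and `x = ∑ⱼ (x αⱼ) βⱼ`. Hence `x ↦ (x αⱼ)ⱼ` and
`c ↦ ∑ⱼ cⱼ βⱼ` exhibit `Rₙ` as a direct summand of `R₀ᴺ`.
-/

theorem Module.finite_projective_of_sum_smul_eq_self {S M κ : Type*} [Semiring S]
    [AddCommMonoid M] [Module S M] [Fintype κ] (f : κ → M →ₗ[S] S) (m : κ → M)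
    (h : ∀ x, ∑ j, f j x • m j = x) :
    Module.Finite S M ∧ Module.Projective S M := by
  have hsplit : Fintype.linearCombination S m ∘ₗ LinearMap.pi f = LinearMap.id := by
    ext x
    simp [Fintype.linearCombination_apply, h]
  exact ⟨Module.Finite.of_surjective (Fintype.linearCombination S m)
    fun x => ⟨_, LinearMap.congr_fun hsplit x⟩, Module.Projective.of_split _ _ hsplit⟩

namespace SetLike

/- The `R₀`-module structure on `Rₙ` is a parameter, pinned down by `hsmul`: Mathlib's
`DirectSum.instModuleOfNat` lives over a semiring structure on `R₀` that is defeq to the subsemiring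
one only when `0 + 0` reduces to `0` (as in `ℤ`). -/
variable {ι R σ : Type*} [DecidableEq ι] [AddMonoid ι] [Semiring R] [SetLike σ R]
  [AddSubmonoidClass σ R] (𝒜 : ι → σ) [GradedRing 𝒜] {n : ι} [Module (𝒜 0) (𝒜 n)]

def mulRightToGradeZero (hsmul : ∀ (a : 𝒜 0) (x : 𝒜 n), ((a • x : 𝒜 n) : R) = a * x) {m : ι}
    (hnm : n + m = 0) (a : R) (ha : a ∈ 𝒜 m) : 𝒜 n →ₗ[𝒜 0] 𝒜 0 where
  toFun x := ⟨x * a, hnm ▸ SetLike.mul_mem_graded x.2 ha⟩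
  map_add' x y := Subtype.ext (add_mul (x : R) y a)
  map_smul' r x := Subtype.ext <| by
    change ((r • x : 𝒜 n) : R) * a = r * (x * a)
    rw [hsmul, mul_assoc]

theorem finite_projective_of_sum_mul_eq_one
    (hsmul : ∀ (a : 𝒜 0) (x : 𝒜 n), ((a • x : 𝒜 n) : R) = a * x) {m : ι} (hnm : n + m = 0)
    {κ : Type*} [Fintype κ] (α β : κ → R) (hα : ∀ j, α j ∈ 𝒜 m) (hβ : ∀ j, β j ∈ 𝒜 n)
    (h : ∑ j, α j * β j = 1) :
    Module.Finite (𝒜 0) (𝒜 n) ∧ Module.Projective (𝒜 0) (𝒜 n) := by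
  refine Module.finite_projective_of_sum_smul_eq_self
    (fun j => mulRightToGradeZero 𝒜 hsmul hnm (α j) (hα j)) (fun j => ⟨β j, hβ j⟩) fun x => ?_
  apply Subtype.ext
  simp only [AddSubmonoidClass.coe_finsetSum, hsmul]
  change ∑ j, (x : R) * α j * β j = x
  simp only [mul_assoc, ← Finset.mul_sum, h, mul_one]

end SetLike

theorem coe_smul_gradeZeroModule {R : Type*} [Ring R] (𝒜 : ℤ → AddSubgroup R) [GradedRing 𝒜]
    {i : ℤ} (a : 𝒜 0) (b : 𝒜 i) :
    letI := gradeZeroModule 𝒜 i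
    ((a • b : 𝒜 i) : R) = a * b := by
  -- `a • b` is `a * b` cast along `zero_add i`, which does not reduce for a variable `i`.
  have coe_cast : ∀ (j : ℤ) (h : 0 + i = j) (x : 𝒜 (0 + i)),
      ((@Eq.rec ℤ (0 + i) (fun a _ => 𝒜 a) x j h : 𝒜 j) : R) = x := by
    rintro j rfl x
    rfl
  exact coe_cast i (zero_add i) _

/-- **Corollary.**  If `R` is a strongly `ℤ`-graded ring, then for every `n : ℤ` the
homogeneous component `R_n` is a finitely generated projective left `R₀`-module. -/
theorem components_fg_projective_of_stronglyGraded {R : Type*} [Ring R]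
    (𝒜 : ℤ → AddSubgroup R) [GradedRing 𝒜]
    (hstrong : ∀ n : ℤ, HasPartitionOfUnity 𝒜 n) (n : ℤ) :
    @Module.Finite ↥(𝒜 0) ↥(𝒜 n) _ _ (gradeZeroModule 𝒜 n) ∧
    @Module.Projective ↥(𝒜 0) _ ↥(𝒜 n) _ (gradeZeroModule 𝒜 n) := by
  let := gradeZeroModule 𝒜 n
  obtain ⟨N, α, β, hα, hβ, hsum⟩ := hstrong (-n)
  exact SetLike.finite_projective_of_sum_mul_eq_one 𝒜 (coe_smul_gradeZeroModule 𝒜)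
    (add_neg_cancel n) α β hα (fun j => neg_neg n ▸ hβ j) hsum
end

section
/- Let K be a ring, let C and C′ be ℤ-indexed chain complexes of K-modules with differentials d and d′, and let g : C → C′ be an isomorphism of chain complexes. Then C is contractible if and only if g admits a proto-null homotopy, i.e. there exists a family of K-linear maps t_k : C_k → C′_{k+1} such that d′_{k+1} ∘ t_k + t_{k−1} ∘ d_k : C_k → C′_k is an isomorphism for every k ∈ ℤ. -/
/-!
If `ψ` is an isomorphism homotopic to `0`, then `𝟙 = ψ⁻¹ ≫ ψ ≃ ψ⁻¹ ≫ 0 = 0`. Given a proto-null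
homotopy `t` of `g`, the maps `t ≫ g⁻¹` are a null homotopy of a chain endomorphism of `C` whose
components `(d' t + t d) ≫ g⁻¹` are isomorphisms. Conversely, a contraction `s` of `C` yields
`t = s ≫ g`, for which `d' t + t d = (d s + s d) ≫ g = g`.
-/

open CategoryTheory

noncomputable def Homotopy.idZeroOfIsIso {V : Type*} [Category V] [Preadditive V] {ι : Type*}
    {c : ComplexShape ι} {C : HomologicalComplex V c} {ψ : C ⟶ C} [IsIso ψ] (h : Homotopy ψ 0) :
    Homotopy (𝟙 C) 0 :=
  (Homotopy.ofEq (IsIso.inv_hom_id ψ).symm).trans <|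
    (h.compLeft (inv ψ)).trans (Homotopy.ofEq Limits.comp_zero)

namespace ChainComplex

variable {V : Type*} [Category V] [Preadditive V] {C C' C'' : ChainComplex V ℤ}

def protoNullMap (t : ∀ k : ℤ, C.X k ⟶ C'.X (k + 1)) (k : ℤ) : C.X k ⟶ C'.X k :=
  t k ≫ C'.d (k + 1) k +
    C.d k (k - 1) ≫ t (k - 1) ≫ eqToHom (congrArg C'.X (sub_add_cancel k 1))

lemma protoNullMap_comp (t : ∀ k : ℤ, C.X k ⟶ C'.X (k + 1)) (f : C' ⟶ C'') (k : ℤ) :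
    protoNullMap (fun k => t k ≫ f.f (k + 1)) k = protoNullMap t k ≫ f.f k := by
  simp [protoNullMap, Preadditive.add_comp]

lemma _root_.Homotopy.protoNullMap_hom {f : C ⟶ C'} (h : Homotopy f 0) (k : ℤ) :
    protoNullMap (fun k => h.hom k (k + 1)) k = f.f k := by
  have hcomm := h.comm k
  rw [dNext_eq h.hom (show (ComplexShape.down ℤ).Rel k (k - 1) by simp),
    prevD_eq h.hom (show (ComplexShape.down ℤ).Rel (k + 1) k by simp)] at hcomm
  simp [protoNullMap, hcomm, add_comm]

noncomputable def protoNullChainMap (t : ∀ k : ℤ, C.X k ⟶ C'.X (k + 1)) : C ⟶ C' :=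
  Homotopy.nullHomotopicMap' fun i _ hij => t i ≫ eqToHom (congrArg C'.X hij)

noncomputable def protoNullChainMapHomotopyZero (t : ∀ k : ℤ, C.X k ⟶ C'.X (k + 1)) :
    Homotopy (protoNullChainMap t) 0 :=
  Homotopy.nullHomotopy' _

lemma protoNullChainMap_f (t : ∀ k : ℤ, C.X k ⟶ C'.X (k + 1)) (k : ℤ) :
    (protoNullChainMap t).f k = protoNullMap t k := by
  rw [protoNullChainMap, Homotopy.nullHomotopicMap'_f (c := ComplexShape.down ℤ) (k₂ := k + 1)
    (k₀ := k - 1) (by simp) (by simp), protoNullMap, add_comm]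
  simp

end ChainComplex

open ChainComplex in
/-- **Lemma (proto-null homotopies).**  Let `K` be a ring, let `C`, `C'` be `ℤ`-indexed
chain complexes of `K`-modules, and let `g : C ≅ C'` be an isomorphism of chain
complexes.  Then `C` is contractible (its identity map is chain homotopic to the zero
map) if and only if `g` admits a proto-null homotopy: a family of `K`-linear maps
`t k : C k → C' (k+1)` such that `d' ∘ t + t ∘ d : C k → C' k` is an isomorphism for
every `k : ℤ`. -/
theorem contractible_iff_protoNullHomotopy {K : Type} [Ring K]
    (C C' : ChainComplex (ModuleCat K) ℤ) (g : C ≅ C') :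
    Nonempty (Homotopy (𝟙 C) 0) ↔
      ∃ t : ∀ k : ℤ, C.X k ⟶ C'.X (k + 1), ∀ k : ℤ,
        IsIso (t k ≫ C'.d (k + 1) k +
          C.d k (k - 1) ≫ t (k - 1) ≫ eqToHom (congrArg C'.X (by omega))) := by
  constructor
  · rintro ⟨h⟩
    refine ⟨fun k => h.hom k (k + 1) ≫ g.hom.f (k + 1), fun k => ?_⟩
    change IsIso (protoNullMap (fun k => h.hom k (k + 1) ≫ g.hom.f (k + 1)) k)
    rw [protoNullMap_comp, h.protoNullMap_hom, HomologicalComplex.id_f, Category.id_comp]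
    infer_instance
  · rintro ⟨t, ht⟩
    let s := fun k => t k ≫ g.inv.f (k + 1)
    have : ∀ k, IsIso ((protoNullChainMap s).f k) := fun k => by
      rw [protoNullChainMap_f, protoNullMap_comp]
      have : IsIso (protoNullMap t k) := ht k
      infer_instance
    have : IsIso (protoNullChainMap s) := HomologicalComplex.Hom.isIso_of_components _
    exact ⟨(protoNullChainMapHomotopyZero s).idZeroOfIsIso⟩
end

section
/- Let K be a ring, Σ a collection of square matrices over K, and λ : K → L a universal Σ-inverting ring homomorphism. Then λ is an epimorphism in the category of unital rings: for any ring T and any ring homomorphisms α, β : L → T with α ∘ λ = β ∘ λ, one has α = β. -/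
universe u v

/-- A ring homomorphism `f : K → S` is `Σ`-inverting for a collection `Σ` of square
matrices over `K` (one set `Σ n` of `n × n` matrices for each `n`) if the entrywise
image under `f` of every matrix in `Σ` is invertible over `S`. -/
def IsMatInverting {K : Type u} {S : Type v} [Ring K] [Ring S]
    (Sig : ∀ n : ℕ, Set (Matrix (Fin n) (Fin n) K)) (f : K →+* S) : Prop :=
  ∀ (n : ℕ), ∀ A ∈ Sig n, IsUnit (A.map f)

/-- A `Σ`-inverting ring homomorphism `lam : K → L` is universal if every
`Σ`-inverting ring homomorphism `f : K → S` factors uniquely through it. -/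
def IsUniversalMatInverting {K : Type u} {L : Type u} [Ring K] [Ring L]
    (Sig : ∀ n : ℕ, Set (Matrix (Fin n) (Fin n) K)) (lam : K →+* L) : Prop :=
  IsMatInverting Sig lam ∧
    ∀ (S : Type u) [Ring S] (f : K →+* S), IsMatInverting Sig f →
      ∃! g : L →+* S, g.comp lam = f

theorem IsMatInverting.comp {K : Type u} {S : Type v} {R : Type*} [Ring K] [Ring S] [Ring R]
    {Sig : ∀ n : ℕ, Set (Matrix (Fin n) (Fin n) K)} {f : K →+* S}
    (hf : IsMatInverting Sig f) (g : S →+* R) : IsMatInverting Sig (g.comp f) := by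
  intro n A hA
  simpa only [RingHom.mapMatrix_apply, Matrix.map_map, RingHom.coe_comp]
    using (hf n A hA).map g.mapMatrix

/-- **Proposition.**  A universal `Σ`-inverting ring homomorphism `lam : K → L` is an
epimorphism in the category of unital rings: any two ring homomorphisms
`α, β : L → T` with `α ∘ lam = β ∘ lam` are equal. -/
theorem universal_inverting_epi {K L T : Type u} [Ring K] [Ring L] [Ring T]
    (Sig : ∀ n : ℕ, Set (Matrix (Fin n) (Fin n) K))
    (lam : K →+* L) (hlam : IsUniversalMatInverting Sig lam)
    (α β : L →+* T) (h : α.comp lam = β.comp lam) : α = β :=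
  -- α and β both factor the Σ-inverting map α ∘ lam through lam.
  (hlam.2 T (α.comp lam) (hlam.1.comp α)).unique rfl h.symm
end
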